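/- If (X, Y) and (Z, W) are both bi-R-diagonal pairs in (A, φ) and the pairs are *-bi-free, then the pair (X + Z, Y + W) is bi-R-diagonal. -/

import Mathlib

open scoped Classical

/-- Labels for left (`l`) and right (`r`) indices. -/
inductive Side : Type
  | l | r
deriving DecidableEq

variable {n k : ℕ}

/-- The list of indices of `{0, …, n-1}`: first the indices labelled `l` in increasing
order, then the indices labelled `r` in decreasing order. -/
def sListFn (χ : Fin n → Side) : List (Fin n) :=
  ((List.finRange n).filter fun i => decide (χ i = Side.l)) ++
    (((List.finRange n).filter fun i => decide (χ i = Side.r)).reverse)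

lemma sListFn_length (χ : Fin n → Side) : (sListFn χ).length = n := by
  have h : ∀ i ∈ List.finRange n,
      (decide (χ i = Side.r)) = (! decide (χ i = Side.l)) := by
    intro i _; cases hx : χ i <;> simp [hx]
  simp only [sListFn, List.length_append, List.length_reverse]
  rw [List.filter_congr h, ← List.length_append,
    (List.filter_append_perm _ _).length_eq, List.length_finRange]

lemma sListFn_nodup (χ : Fin n → Side) : (sListFn χ).Nodup := by
  refine List.Nodup.append ((List.nodup_finRange n).filter _)
    (List.nodup_reverse.mpr ((List.nodup_finRange n).filter _)) ?_
  intro a ha hb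
  rw [List.mem_reverse] at hb
  rw [List.mem_filter] at ha hb
  have h1 := of_decide_eq_true ha.2
  have h2 := of_decide_eq_true hb.2
  rw [h1] at h2; cases h2

/-- The underlying function of the permutation `s_χ`. -/
def sFun (χ : Fin n → Side) : Fin n → Fin n :=
  fun i => (sListFn χ).get (Fin.cast (sListFn_length χ).symm i)

lemma sFun_bijective (χ : Fin n → Side) : Function.Bijective (sFun χ) := by
  have hinj : Function.Injective (sFun χ) := by
    intro a b hab
    have h := List.nodup_iff_injective_get.mp (sListFn_nodup χ) hab
    exact Fin.ext (by simpa using congrArg Fin.val h)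
  exact Finite.injective_iff_bijective.mp hinj

/-- The permutation `s_χ` associated to a map `χ : {1,…,n} → {l,r}`. -/
noncomputable def sChi (χ : Fin n → Side) : Equiv.Perm (Fin n) :=
  Equiv.ofBijective (sFun χ) (sFun_bijective χ)

/-- The action of a permutation on a partition (viewed as a setoid):
`(σ · π)` relates `x, y` iff `π` relates `σ⁻¹ x, σ⁻¹ y`. -/
def applyPerm (σ : Equiv.Perm (Fin n)) (π : Setoid (Fin n)) : Setoid (Fin n) :=
  Setoid.comap σ.symm π

/-- A partition of `{1,…,k}` (as a setoid) is non-crossing. -/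
def IsNC (π : Setoid (Fin k)) : Prop :=
  ∀ a b c d : Fin k, a < b → b < c → c < d → π.r a c → π.r b d → π.r a b

/-- A partition is bi-non-crossing with respect to `χ` iff `s_χ⁻¹ · τ` is non-crossing. -/
def IsBNC (χ : Fin k → Side) (τ : Setoid (Fin k)) : Prop :=
  IsNC (Setoid.comap (sChi χ) τ)
/-- The ordered list of elements of the block of `c : Quotient τ`, in increasing order. -/
noncomputable def blockList (τ : Setoid (Fin k)) (c : Quotient τ) : List (Fin k) :=
  (List.finRange k).filter fun i => decide (Quotient.mk τ i = c)

/-- Restrict a function on `Fin k` along a list of indices. -/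
def restrictIdx {α : Type*} (l : List (Fin k)) (f : Fin k → α) : Fin l.length → α :=
  fun j => f (l.get j)

/-- A noncommutative `*`-probability space structure on a complex `*`-algebra `A`:
a unital, linear, positive functional. -/
structure NCPS (A : Type*) [Ring A] [Algebra ℂ A] [StarRing A] where
  φ : A → ℂ
  linear : IsLinearMap ℂ φ
  unital : φ 1 = 1
  pos : ∀ a : A, 0 ≤ (φ (star a * a)).re ∧ (φ (star a * a)).im = 0

variable {A : Type*} [Ring A] [Algebra ℂ A] [StarRing A]
variable {B : Type*} [Ring B] [Algebra ℂ B] [StarRing B]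

/-- `κ_{χ,τ}(a₁,…,a_k)`: the multiplicative extension of a family of bi-free cumulant
functionals `κ` over the blocks of the partition `τ` (each block read in increasing order,
with the induced `χ`). -/
noncomputable def biCumPart (κ : ∀ m : ℕ, (Fin m → Side) → (Fin m → A) → ℂ)
    (χ : Fin k → Side) (τ : Setoid (Fin k)) (a : Fin k → A) : ℂ :=
  ∏ᶠ c : Quotient τ,
    κ (blockList τ c).length (restrictIdx (blockList τ c) χ) (restrictIdx (blockList τ c) a)

/-- `κ` is the family of bi-free cumulant functionals of `φ`: the moment–cumulant
formula holds, summing over bi-non-crossing partitions. -/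
def IsBiFreeCumulant (φ : A → ℂ) (κ : ∀ m : ℕ, (Fin m → Side) → (Fin m → A) → ℂ) : Prop :=
  ∀ (k : ℕ) (χ : Fin k → Side) (a : Fin k → A),
    φ (List.ofFn a).prod = ∑ᶠ τ ∈ {τ : Setoid (Fin k) | IsBNC χ τ}, biCumPart κ χ τ a

/-- The multiplicative extension of a family of free cumulant functionals over the blocks
of a partition. -/
noncomputable def freeCumPart (κ : ∀ m : ℕ, (Fin m → B) → ℂ)
    (π : Setoid (Fin k)) (b : Fin k → B) : ℂ :=
  ∏ᶠ c : Quotient π, κ (blockList π c).length (restrictIdx (blockList π c) b)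

/-- `κ` is the family of free cumulant functionals of `ψ`: the moment–cumulant formula
holds, summing over non-crossing partitions. -/
def IsFreeCumulant (ψ : B → ℂ) (κ : ∀ m : ℕ, (Fin m → B) → ℂ) : Prop :=
  ∀ (k : ℕ) (b : Fin k → B),
    ψ (List.ofFn b).prod = ∑ᶠ π ∈ {π : Setoid (Fin k) | IsNC π}, freeCumPart κ π b

/-- The sequence with entries in `{X, X*}` at left indices and `{Y, Y*}` at right indices,
where `ε i = true` means the `i`-th entry is starred. -/
def pairSeq (X Y : A) (χ : Fin k → Side) (ε : Fin k → Bool) : Fin k → A := fun i =>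
  match χ i, ε i with
  | Side.l, false => X
  | Side.l, true => star X
  | Side.r, false => Y
  | Side.r, true => star Y

/-- A `Bool`-sequence is alternating. -/
def AltStars (g : Fin k → Bool) : Prop :=
  ∀ (i : ℕ) (h : i + 1 < k), g ⟨i + 1, h⟩ = !g ⟨i, Nat.lt_of_succ_lt h⟩

/-- The pair `(X, Y)` is bi-R-diagonal (with respect to the bi-free cumulants `κ`):
every bi-free cumulant with left entries in `{X, X*}` and right entries in `{Y, Y*}`
vanishes if it is of odd order or if its entries fail to alternate in `*`-terms and
non-`*`-terms when read in the `χ`-order. -/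
def IsBiRDiagonal (κ : ∀ m : ℕ, (Fin m → Side) → (Fin m → A) → ℂ) (X Y : A) : Prop :=
  ∀ (k : ℕ) (χ : Fin k → Side) (ε : Fin k → Bool),
    (Odd k ∨ ¬ AltStars fun i => ε (sChi χ i)) →
      κ k χ (pairSeq X Y χ ε) = 0

/-- The pairs `(X, Y)` and `(Z, W)` are `*`-bi-free: all mixed bi-free cumulants with
entries from `{X, X*} ∪ {Z, Z*}` at left indices and `{Y, Y*} ∪ {W, W*}` at right indices
vanish. -/
def StarBiFree (κ : ∀ m : ℕ, (Fin m → Side) → (Fin m → A) → ℂ) (X Y Z W : A) : Prop :=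
  ∀ (k : ℕ) (χ : Fin k → Side) (ω ε : Fin k → Bool),
    (∃ i j, ω i ≠ ω j) →
      κ k χ (fun i => if ω i then pairSeq Z W χ ε i else pairSeq X Y χ ε i) = 0

/-- `(u_l, u_r)` is a bi-Haar unitary pair with respect to `φ`: both unitaries, the
generated `*`-algebras commute, and `φ(u_lⁿ u_rᵐ) = δ_{n+m,0}` for all `n, m ∈ ℤ`. -/
structure IsBiHaar (φ : A → ℂ) (ul ur : A) : Prop where
  mul_star_l : ul * star ul = 1
  star_mul_l : star ul * ul = 1
  mul_star_r : ur * star ur = 1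
  star_mul_r : star ur * ur = 1
  comm : Commute ul ur
  comm_sl : Commute (star ul) ur
  comm_sr : Commute ul (star ur)
  comm_ss : Commute (star ul) (star ur)
  mom_pp : ∀ p q : ℕ, φ (ul ^ p * ur ^ q) = if p + q = 0 then 1 else 0
  mom_pm : ∀ p q : ℕ, φ (ul ^ p * (star ur) ^ q) = if p = q then 1 else 0
  mom_mp : ∀ p q : ℕ, φ ((star ul) ^ p * ur ^ q) = if p = q then 1 else 0
  mom_mm : ∀ p q : ℕ, φ ((star ul) ^ p * (star ur) ^ q) = if p + q = 0 then 1 else 0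

/-- `v` is a (free) Haar unitary with respect to `ψ`: `v` is a unitary and
`ψ(vⁿ) = 0` for all `n ∈ ℤ \ {0}`. -/
structure IsHaarUnitary (ψ : B → ℂ) (v : B) : Prop where
  mul_star : v * star v = 1
  star_mul : star v * v = 1
  mom_pos : ∀ m : ℕ, 0 < m → ψ (v ^ m) = 0
  mom_neg : ∀ m : ℕ, 0 < m → ψ ((star v) ^ m) = 0

/-!
Bi-free cumulants are multilinear: this follows from the bi-free moment–cumulant formula by
strong induction on the order, since the full partition contributes `κ k` itself while every
other bi-non-crossing partition only involves cumulants of smaller order. Expanding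
`κ (pairSeq (X + Z) (Y + W))` by multilinearity gives a sum of cumulants whose entries come
from `(X, Y)` or from `(Z, W)`. The mixed ones vanish by `*`-bi-freeness, and the pure ones
are cumulants of a single bi-R-diagonal pair, which vanish when the order is odd or the
`*`-pattern does not alternate in the `χ`-order.
-/

instance Setoid.instFinite {α : Type*} [Finite α] : Finite (Setoid α) :=
  Finite.of_injective (fun s : Setoid α => s.r) fun s t h =>
    Setoid.ext fun a b => by simp only at h; rw [h]

theorem prod_ofFn_add {R : Type*} [Semiring R] {k : ℕ} (a b : Fin k → R) :
    (List.ofFn fun i => a i + b i).prod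
      = ∑ ω : Fin k → Bool, (List.ofFn fun i => if ω i then b i else a i).prod := by
  induction k with
  | zero => simp
  | succ k ih =>
    rw [← (Fin.consEquiv fun _ => Bool).sum_comp, Fintype.sum_prod_type]
    simp only [List.ofFn_succ, List.prod_cons, Fin.consEquiv_apply, Fin.cons_zero,
      Fin.cons_succ, ← Finset.mul_sum, ← ih, Fintype.sum_bool, Bool.false_eq_true, ↓reduceIte,
      ← add_mul, add_comm (b 0)]

section Blocks

variable (τ : Setoid (Fin k))

theorem mem_blockList {c : Quotient τ} {i : Fin k} :
    i ∈ blockList τ c ↔ Quotient.mk τ i = c := by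
  simp [blockList]

theorem blockList_nodup (c : Quotient τ) : (blockList τ c).Nodup :=
  (List.nodup_finRange k).filter _

theorem blockList_top (c : Quotient (⊤ : Setoid (Fin k))) : blockList ⊤ c = List.finRange k :=
  List.filter_eq_self.mpr fun _ _ => decide_eq_true <| c.inductionOn fun _ => Quotient.sound trivial

variable {τ} in
theorem blockList_length_lt (hτ : τ ≠ ⊤) (c : Quotient τ) : (blockList τ c).length < k := by
  obtain ⟨a, b, hab⟩ : ∃ a b, ¬ τ a b := by
    by_contra! h
    exact hτ (Setoid.ext fun a b => iff_of_true (h a b) trivial)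
  refine (List.length_filter_lt_length_iff_exists.mpr ?_).trans_eq List.length_finRange
  by_cases ha : Quotient.mk τ a = c
  · exact ⟨b, List.mem_finRange b,
      fun hb => hab (Quotient.exact (ha.trans (of_decide_eq_true hb).symm))⟩
  · exact ⟨a, List.mem_finRange a, fun h => ha (of_decide_eq_true h)⟩

noncomputable def blockRestrictEquiv (α : Type*) :
    (Fin k → α) ≃ ∀ c : Quotient τ, Fin (blockList τ c).length → α :=
  (Equiv.arrowCongr (Equiv.sigmaFiberEquiv (Quotient.mk τ)).symm (Equiv.refl α)).trans <|
    (Equiv.piCurry fun _ _ => α).trans <| Equiv.piCongrRight fun c =>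
      Equiv.arrowCongr ((blockList_nodup τ c).getEquiv.trans
        (Equiv.subtypeEquivRight fun _ => mem_blockList τ)).symm (Equiv.refl α)

end Blocks

theorem restrictIdx_finRange {α : Type*} (f : Fin k → α) :
    restrictIdx (List.finRange k) f = f ∘ Fin.cast List.length_finRange :=
  funext fun _ => by simp [restrictIdx]

section Cumulants

variable {M : Type*} (κ : ∀ m : ℕ, (Fin m → Side) → (Fin m → M) → ℂ)

theorem biCumPart_top (hk : 0 < k) (χ : Fin k → Side) (a : Fin k → M) :
    biCumPart κ χ ⊤ a = κ k χ a := by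
  have : Unique (Quotient (⊤ : Setoid (Fin k))) :=
    { default := Quotient.mk _ ⟨0, hk⟩
      uniq := fun c => c.inductionOn fun _ => Quotient.sound trivial }
  rw [biCumPart, finprod_unique, blockList_top, restrictIdx_finRange, restrictIdx_finRange]
  generalize_proofs h
  generalize (List.finRange k).length = m at h
  subst h
  rfl

/-- Multiadditivity of `κ m`, in its fully expanded form. -/
def SplitsAdditively [Add M] (m : ℕ) : Prop :=
  ∀ (χ : Fin m → Side) (a b : Fin m → M),
    κ m χ (fun i => a i + b i)
      = ∑ ω : Fin m → Bool, κ m χ (fun i => if ω i then b i else a i)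

theorem biCumPart_add [Add M] (τ : Setoid (Fin k))
    (hτ : ∀ c : Quotient τ, SplitsAdditively κ (blockList τ c).length)
    (χ : Fin k → Side) (a b : Fin k → M) :
    biCumPart κ χ τ (fun i => a i + b i)
      = ∑ ω : Fin k → Bool, biCumPart κ χ τ (fun i => if ω i then b i else a i) := by
  simp only [biCumPart, finprod_eq_prod_of_fintype]
  calc _ = ∏ c, ∑ g : Fin (blockList τ c).length → Bool, κ _ (restrictIdx _ χ)
          (fun j => if g j then restrictIdx (blockList τ c) b j
            else restrictIdx (blockList τ c) a j) :=
        Finset.prod_congr rfl fun c _ => hτ c _ _ _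
    _ = _ := Finset.prod_univ_sum _ _
    -- `blockRestrictEquiv τ Bool ω c` unfolds to `restrictIdx (blockList τ c) ω`
    _ = _ := ((blockRestrictEquiv τ Bool).sum_comp _).symm

end Cumulants

theorem IsBiFreeCumulant.splitsAdditively {R : Type*} [Ring R] {φ : R →+ ℂ}
    {κ : ∀ m : ℕ, (Fin m → Side) → (Fin m → R) → ℂ} (hκ : IsBiFreeCumulant φ κ)
    (k : ℕ) :
    SplitsAdditively κ k := by
  induction k using Nat.strong_induction_on with
  | _ k ih =>
  intro χ a b
  rcases k.eq_zero_or_pos with rfl | hk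
  · rw [Fintype.sum_unique]
    exact congrArg (κ 0 χ) (Subsingleton.elim _ _)
  have := Fintype.ofFinite (Setoid (Fin k))
  set P := Finset.univ.filter (IsBNC χ)
  have hmoment (f : Fin k → R) : φ (List.ofFn f).prod = ∑ τ ∈ P, biCumPart κ χ τ f := by
    rw [hκ, ← finsum_mem_coe_finset, Finset.coe_filter_univ]
  have hsplit : ∀ τ ∈ P.erase ⊤, biCumPart κ χ τ (fun i => a i + b i)
      = ∑ ω : Fin k → Bool, biCumPart κ χ τ (fun i => if ω i then b i else a i) :=
    fun τ hτ => biCumPart_add κ τ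
      (fun c => ih _ (blockList_length_lt (Finset.ne_of_mem_erase hτ) c)) χ a b
  have htop : ⊤ ∈ P :=
    Finset.mem_filter.mpr ⟨Finset.mem_univ _, fun _ _ _ _ _ _ _ _ _ => trivial⟩
  have hexpand : ∑ τ ∈ P, biCumPart κ χ τ (fun i => a i + b i)
      = ∑ τ ∈ P, ∑ ω : Fin k → Bool,
          biCumPart κ χ τ (fun i => if ω i then b i else a i) := by
    rw [← hmoment, prod_ofFn_add, map_sum, Finset.sum_comm]
    simp only [hmoment]
  rw [← Finset.add_sum_erase _ _ htop, ← Finset.add_sum_erase _ _ htop,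
    Finset.sum_congr rfl hsplit, add_left_inj, biCumPart_top κ hk] at hexpand
  simpa only [biCumPart_top κ hk] using hexpand

theorem pairSeq_add {R : Type*} [Ring R] [StarRing R] (X Y Z W : R) (χ : Fin k → Side)
    (ε : Fin k → Bool) :
    pairSeq (X + Z) (Y + W) χ ε = fun i => pairSeq X Y χ ε i + pairSeq Z W χ ε i := by
  funext i
  unfold pairSeq
  cases χ i <;> cases ε i <;> simp only [star_add]

/-- the sum of two `*`-bi-free bi-R-diagonal pairs is bi-R-diagonal. -/
theorem biRDiagonal_add {A : Type*} [Ring A] [Algebra ℂ A] [StarRing A]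
    (S : NCPS A) (κ : ∀ m : ℕ, (Fin m → Side) → (Fin m → A) → ℂ)
    (hκ : IsBiFreeCumulant S.φ κ) (X Y Z W : A)
    (hXY : IsBiRDiagonal κ X Y) (hZW : IsBiRDiagonal κ Z W)
    (hfree : StarBiFree κ X Y Z W) :
    IsBiRDiagonal κ (X + Z) (Y + W) := by
  intro k χ ε hodd
  have hexpand :=
    IsBiFreeCumulant.splitsAdditively (φ := (S.linear.mk' S.φ).toAddMonoidHom) hκ k
  rw [pairSeq_add, hexpand]
  refine Finset.sum_eq_zero fun ω _ => ?_
  by_cases hmixed : ∃ i j, ω i ≠ ω j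
  · exact hfree k χ ω ε hmixed
  push Not at hmixed
  by_cases hZ : ∃ i, ω i = true
  · obtain ⟨i₀, hi₀⟩ := hZ
    simpa [fun i => (hmixed i i₀).trans hi₀] using hZW k χ ε hodd
  · push Not at hZ
    simpa [hZ] using hXY k χ ε hodd
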